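/- arXiv:1506.07850 — 6 statements merged into one kernel-verified Lean document; each statement's English description precedes it below -/
import Mathlib

section
/- Let n ≥ 1 and let (P_j)_{j ∈ Fin n} be a projective measurement on a complex Hilbert space H. Then for every continuous linear operator A on H, Σ_j P_j A P_j = 2^{1−n} · A + (1/2^n) · Σ_{x ∈ S} U_x A U_x†, where U_x = Σ_j x_j P_j and S is the set of sign strings x : Fin n → ℝ (each x_j ∈ {−1,1}) excluding the two constant strings (1,…,1) and (−1,…,−1). In particular, the channel ρ ↦ Σ_j P_j ρ P_j of performing the measurement and discarding the outcome is a mixture that applies the identity map with nonzero probability q = 2^{1−n}. -/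
/-!
Averaging over all sign strings `x`, the cross terms `P j A P k` (`j ≠ k`) of `U_x A U_x†` cancel,
because flipping the sign `x k` is an involution that negates `x j x k`; the diagonal terms
survive with weight `x j ^ 2 = 1`. Hence `∑_x U_x A U_x† = 2 ^ n • ∑ j, P j A P j`, and the two
constant strings contribute `A` each, since `U_{±(1,…,1)} = ±1`.
-/

open Finset

local notation "𝕊" => {s : ℝ // s ∈ ({-1, 1} : Finset ℝ)}

theorem sign_coe_mul_self (s : 𝕊) : (s : ℝ) * s = 1 := by
  rcases s with ⟨s, hs⟩
  simp only [mem_insert, mem_singleton] at hs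
  rcases hs with rfl | rfl <;> norm_num

def signNeg (s : 𝕊) : 𝕊 :=
  ⟨-s, by
    rcases s with ⟨s, hs⟩
    simp only [mem_insert, mem_singleton] at hs ⊢
    rcases hs with rfl | rfl <;> simp⟩

theorem signNeg_involutive : Function.Involutive signNeg := fun s => by simp [signNeg]

section SignStrings

variable {ι : Type*} [Fintype ι] [DecidableEq ι]

theorem sum_sign_mul_sign_of_ne {j k : ι} (hjk : j ≠ k) :
    ∑ x : ι → 𝕊, (x j : ℝ) * x k = 0 := by
  set flip : (ι → 𝕊) → (ι → 𝕊) := fun x => Function.update x k (signNeg (x k))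
  have hflip : Function.Involutive flip := fun x => by
    simp [flip, signNeg_involutive (x k)]
  have h := Equiv.sum_comp (hflip.toPerm flip) fun x : ι → 𝕊 => (x j : ℝ) * x k
  simp only [Function.Involutive.coe_toPerm, flip, Function.update_of_ne hjk,
    Function.update_self, signNeg, mul_neg, sum_neg_distrib] at h
  linarith

theorem sum_sign_mul_sign (j k : ι) :
    ∑ x : ι → 𝕊, (x j : ℝ) * x k = if j = k then 2 ^ Fintype.card ι else 0 := by
  split_ifs with hjk
  · subst hjk
    simp [sign_coe_mul_self, card_pair (show (-1 : ℝ) ≠ 1 by norm_num)]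
  · exact sum_sign_mul_sign_of_ne hjk

end SignStrings

theorem sum_lincomb_mul_mul_lincomb_of_orthogonal {Ω ι K R : Type*} [Fintype Ω] [Fintype ι]
    [DecidableEq ι] [CommSemiring K] [Semiring R] [Algebra K R] (c : Ω → ι → K) (N : K)
    (hc : ∀ j k, ∑ ω, c ω j * c ω k = if j = k then N else 0) (Q : ι → R) (A : R) :
    ∑ ω, (∑ j, c ω j • Q j) * A * (∑ k, c ω k • Q k) = N • ∑ j, Q j * A * Q j := by
  have expand : ∀ ω, (∑ j, c ω j • Q j) * A * (∑ k, c ω k • Q k)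
      = ∑ j, ∑ k, (c ω j * c ω k) • (Q j * A * Q k) := fun ω => by
    rw [sum_mul, sum_mul_sum]
    simp only [smul_mul_assoc, mul_smul_comm, smul_smul]
    exact sum_congr rfl fun j _ => sum_congr rfl fun k _ => by rw [mul_comm]
  simp only [expand]
  rw [sum_comm]
  simp only [sum_comm (s := (univ : Finset Ω)), ← sum_smul, hc, ite_smul, zero_smul, sum_ite_eq,
    mem_univ, if_true, smul_sum]

theorem sum_filter_ne_and_ne {α M : Type*} [Fintype α] [DecidableEq α] [AddCommGroup M]
    {a b : α} (hab : a ≠ b) (f : α → M) :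
    ∑ x ∈ univ.filter (fun x => x ≠ a ∧ x ≠ b), f x = ∑ x, f x - f a - f b := by
  rw [sub_sub, ← sum_pair hab, ← sum_sdiff_eq_sub (subset_univ _)]
  congr 1
  ext x
  simp

theorem sum_sign_conj_eq {H : Type*} [NormedAddCommGroup H] [InnerProductSpace ℂ H]
    [CompleteSpace H] {ι : Type*} [Fintype ι] [DecidableEq ι] (P : ι → H →L[ℂ] H)
    (hsa : ∀ j, IsSelfAdjoint (P j)) (A : H →L[ℂ] H) :
    ∑ x : ι → 𝕊, (∑ j, ((x j : ℝ) : ℂ) • P j) * A * star (∑ j, ((x j : ℝ) : ℂ) • P j)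
      = (2 : ℂ) ^ Fintype.card ι • ∑ j, P j * A * P j := by
  have hU : ∀ x : ι → 𝕊, star (∑ j, ((x j : ℝ) : ℂ) • P j) = ∑ j, ((x j : ℝ) : ℂ) • P j :=
    fun x => (isSelfAdjoint_sum _ fun j _ =>
      IsSelfAdjoint.smul (Complex.conj_ofReal _) (hsa j)).star_eq
  simp only [hU]
  refine sum_lincomb_mul_mul_lincomb_of_orthogonal _ _ (fun j k => ?_) P A
  have h := congrArg ((↑) : ℝ → ℂ) (sum_sign_mul_sign j k)
  push_cast [apply_ite] at h
  split_ifs at h ⊢ <;> exact h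

/-- For a projective measurement `(P j)_{j : Fin n}` with `n ≥ 1` on a complex
Hilbert space, the channel `A ↦ ∑ j, P j * A * P j` is a mixture that applies
the identity map with nonzero probability `q = 2 ^ (1 - n)`:
`∑ j, P j A P j = 2^(1-n) • A + (1/2^n) • ∑_{x ∈ S} U x * A * (U x)†`, where
`S` is the set of sign strings excluding the two constant strings. -/
theorem sum_proj_conj_eq_id_mixture
    {H : Type*} [NormedAddCommGroup H] [InnerProductSpace ℂ H] [CompleteSpace H]
    {n : ℕ} (hn : 1 ≤ n) (P : Fin n → H →L[ℂ] H)
    (hsa : ∀ j, IsSelfAdjoint (P j))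
    (hsum : ∑ j, P j = 1)
    (A : H →L[ℂ] H) :
    (0 : ℝ) < (2 : ℝ) ^ ((1 : ℤ) - n) ∧
    ∑ j, P j * A * P j
      = ((2 : ℂ) ^ ((1 : ℤ) - n)) • A + (1 / 2 ^ n : ℂ) •
          ∑ x ∈ Finset.univ.filter
              (fun x : Fin n → ({-1, 1} : Finset ℝ) =>
                x ≠ (fun _ => ⟨1, by norm_num⟩) ∧ x ≠ (fun _ => ⟨-1, by norm_num⟩)),
            (∑ j, ((x j : ℝ) : ℂ) • P j) * A * star (∑ j, ((x j : ℝ) : ℂ) • P j) := by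
  refine ⟨by positivity, ?_⟩
  have hne : (fun _ => ⟨1, by norm_num⟩ : Fin n → 𝕊) ≠ fun _ => ⟨-1, by norm_num⟩ :=
    fun h => absurd (congrArg Subtype.val (congrFun h ⟨0, hn⟩)) (by norm_num)
  rw [sum_filter_ne_and_ne hne, sum_sign_conj_eq P hsa, Fintype.card_fin]
  simp only [Complex.ofReal_one, Complex.ofReal_neg, one_smul, neg_smul, sum_neg_distrib, hsum,
    star_one, star_neg, one_mul, mul_one, neg_mul, mul_neg, neg_neg]
  have h2n : (2 : ℂ) ^ n ≠ 0 := pow_ne_zero _ two_ne_zero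
  rw [zpow_sub₀ two_ne_zero, zpow_one, zpow_natCast, smul_sub, smul_sub, smul_smul, one_div,
    inv_mul_cancel₀ h2n, one_smul]
  module
end

section
/- Let n ≥ 1 and let (P_j)_{j ∈ Fin n} be a projective measurement on a complex Hilbert space H, and let A be a positive operator on H (i.e. ⟨v, Av⟩ is real and nonnegative for all v). Then the operator Σ_j P_j A P_j − 2^{1−n} · A is also positive: for every vector v, ⟨v, (Σ_j P_j A P_j) v⟩ ≥ 2^{1−n} · ⟨v, A v⟩. -/
open scoped InnerProductSpace

/-! Writing `q x = re ⟪x, A x⟫`, positivity of `q (x - y)` gives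
`re ⟪x, A y⟫ + re ⟪y, A x⟫ ≤ q x + q y`; summing this over all pairs of a family `w` of `n`
vectors yields `q (∑ w j) ≤ n * ∑ q (w j)`. For `w j = P j v` the left side is `q v` and, `P j`
being self-adjoint, the right side is `n * re ⟪v, (∑ P j A P j) v⟫`; finally `2 ^ (1 - n) * n ≤ 1`. -/

section QuadraticForm

variable {𝕜 E : Type*} [RCLike 𝕜] [NormedAddCommGroup E] [InnerProductSpace 𝕜 E]

lemma re_inner_map_add_le_of_nonneg {A : E →ₗ[𝕜] E} (hA : ∀ v, 0 ≤ RCLike.re ⟪v, A v⟫_𝕜)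
    (x y : E) :
    RCLike.re ⟪x, A y⟫_𝕜 + RCLike.re ⟪y, A x⟫_𝕜 ≤ RCLike.re ⟪x, A x⟫_𝕜 + RCLike.re ⟪y, A y⟫_𝕜 := by
  have h := hA (x - y)
  simp only [map_sub, inner_sub_left, inner_sub_right] at h
  linarith

lemma re_inner_map_sum_le_card_mul {ι : Type*} [Fintype ι] {A : E →ₗ[𝕜] E}
    (hA : ∀ v, 0 ≤ RCLike.re ⟪v, A v⟫_𝕜) (w : ι → E) :
    RCLike.re ⟪∑ i, w i, A (∑ i, w i)⟫_𝕜 ≤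
      Fintype.card ι * ∑ i, RCLike.re ⟪w i, A (w i)⟫_𝕜 := by
  set q : ι → ℝ := fun i => RCLike.re ⟪w i, A (w i)⟫_𝕜
  set b : ι → ι → ℝ := fun i j => RCLike.re ⟪w i, A (w j)⟫_𝕜
  have hexpand : RCLike.re ⟪∑ i, w i, A (∑ i, w i)⟫_𝕜 = ∑ i, ∑ j, b i j := by
    rw [sum_inner, map_sum]
    simp only [b, map_sum, inner_sum]
  have hsymm : ∑ i, ∑ j, (b i j + b j i) = 2 * ∑ i, ∑ j, b i j := by
    simp only [Finset.sum_add_distrib]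
    rw [Finset.sum_comm (f := fun i j => b j i)]
    ring
  have hpair : ∑ i, ∑ j, (b i j + b j i) ≤ ∑ i, ∑ j, (q i + q j) :=
    Finset.sum_le_sum fun i _ => Finset.sum_le_sum fun j _ =>
      re_inner_map_add_le_of_nonneg hA (w i) (w j)
  have hdiag : ∑ i, ∑ j, (q i + q j) = 2 * (Fintype.card ι * ∑ i, q i) := by
    simp only [Finset.sum_add_distrib, Finset.sum_const, Finset.card_univ, nsmul_eq_mul,
      ← Finset.mul_sum]
    ring
  linarith

end QuadraticForm

lemma two_zpow_one_sub_mul_le_one (n : ℕ) : (2 : ℝ) ^ ((1 : ℤ) - n) * n ≤ 1 := by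
  rcases n with _ | k
  · simp
  · have hk : (k + 1 : ℝ) ≤ 2 ^ k := by exact_mod_cast Nat.lt_two_pow_self
    have hexp : (1 : ℤ) - (k + 1 : ℕ) = -(k : ℤ) := by push_cast; ring
    rw [hexp, zpow_neg, zpow_natCast, Nat.cast_succ, inv_mul_le_iff₀ (by positivity), mul_one]
    exact hk

theorem sum_proj_conj_pos_part_general
    {H : Type*} [NormedAddCommGroup H] [InnerProductSpace ℂ H] [CompleteSpace H]
    {n : ℕ} (P : Fin n → H →L[ℂ] H)
    (hsa : ∀ j, IsSelfAdjoint (P j))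
    (hsum : ∑ j, P j = 1)
    (A : H →L[ℂ] H)
    (hA : ∀ v : H, 0 ≤ (⟪v, A v⟫_ℂ).re ∧ (⟪v, A v⟫_ℂ).im = 0) :
    ∀ v : H, (2 : ℝ) ^ ((1 : ℤ) - n) * (⟪v, A v⟫_ℂ).re ≤
      (⟪v, (∑ j, P j * A * P j) v⟫_ℂ).re := by
  intro v
  have hv : ∑ j, P j v = v := by
    rw [← sum_apply, hsum, one_apply_eq_self]
  have hconj : ∀ j, ⟪v, (P j * A * P j) v⟫_ℂ = ⟪P j v, A (P j v)⟫_ℂ := fun j =>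
    ((hsa j).isSymmetric _ _).symm
  have hrhs : (⟪v, (∑ j, P j * A * P j) v⟫_ℂ).re = ∑ j, (⟪P j v, A (P j v)⟫_ℂ).re := by
    simp only [sum_apply, inner_sum, hconj, Complex.re_sum]
  have hconvex : (⟪v, A v⟫_ℂ).re ≤ n * ∑ j, (⟪P j v, A (P j v)⟫_ℂ).re := by
    simpa only [ContinuousLinearMap.coe_coe, RCLike.re_to_complex, hv, Fintype.card_fin] using
      re_inner_map_sum_le_card_mul (A := (A : H →ₗ[ℂ] H)) (fun v => (hA v).1) (fun j => P j v)
  have hnonneg : 0 ≤ ∑ j, (⟪P j v, A (P j v)⟫_ℂ).re := Finset.sum_nonneg fun j _ => (hA _).1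
  rw [hrhs]
  calc (2 : ℝ) ^ ((1 : ℤ) - n) * (⟪v, A v⟫_ℂ).re
      ≤ (2 : ℝ) ^ ((1 : ℤ) - n) * (n * ∑ j, (⟪P j v, A (P j v)⟫_ℂ).re) := by gcongr
    _ = (2 : ℝ) ^ ((1 : ℤ) - n) * n * ∑ j, (⟪P j v, A (P j v)⟫_ℂ).re := by ring
    _ ≤ ∑ j, (⟪P j v, A (P j v)⟫_ℂ).re := by
      exact mul_le_of_le_one_left hnonneg (two_zpow_one_sub_mul_le_one n)

/-- For a projective measurement `(P j)_{j : Fin n}` with `n ≥ 1` on a complex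
Hilbert space and a positive operator `A` (i.e. `⟪v, A v⟫` real and
nonnegative), the operator `∑ j, P j * A * P j - 2^(1-n) • A` is positive:
`⟪v, (∑ j, P j A P j) v⟫ ≥ 2^(1-n) * ⟪v, A v⟫` for every `v`. -/
theorem sum_proj_conj_pos_part
    {H : Type*} [NormedAddCommGroup H] [InnerProductSpace ℂ H] [CompleteSpace H]
    {n : ℕ} (hn : 1 ≤ n) (P : Fin n → H →L[ℂ] H)
    (hsa : ∀ j, IsSelfAdjoint (P j))
    (hidem : ∀ j, P j * P j = P j)
    (horth : ∀ j k, j ≠ k → P j * P k = 0)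
    (hsum : ∑ j, P j = 1)
    (A : H →L[ℂ] H)
    (hA : ∀ v : H, 0 ≤ (⟪v, A v⟫_ℂ).re ∧ (⟪v, A v⟫_ℂ).im = 0) :
    ∀ v : H, (2 : ℝ) ^ ((1 : ℤ) - n) * (⟪v, A v⟫_ℂ).re ≤
      (⟪v, (∑ j, P j * A * P j) v⟫_ℂ).re :=
  sum_proj_conj_pos_part_general P hsa hsum A hA
end

section
/- Let n ≥ 1, let (P_j)_{j ∈ Fin n} be a family of complex d × d matrices that are self-adjoint idempotents, pairwise orthogonal (P_j P_k = 0 for j ≠ k), and sum to the identity, and let ρ and E be positive semidefinite complex d × d matrices. Then Re(trace(E · Σ_j P_j ρ P_j)) ≥ 2^{1−n} · Re(trace(E · ρ)). In particular, if trace(E ρ) > 0 then trace(E · Σ_j P_j ρ P_j) > 0: performing the projective measurement and discarding the outcome cannot make a subsequently possible measurement outcome impossible. -/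
/-! For a sign vector `ε : ι → ℤˣ` the matrix `U ε = ∑ j, ε j • P j` is self-adjoint, so
`U ε * ρ * U ε` is positive semidefinite and `tr (E * (U ε * ρ * U ε)) ≥ 0`. Summing over all
`2 ^ n` sign vectors cancels the cross terms `P j * ρ * P k` (`j ≠ k`) and leaves
`2 ^ n • ∑ j, P j * ρ * P j`, while the two constant sign vectors give `U = ±1` and contribute
`tr (E * ρ)` each. Hence `2 * tr (E * ρ) ≤ 2 ^ n * tr (E * ∑ j, P j * ρ * P j)`. -/

open scoped ComplexOrder Matrix

theorem sum_units_int_apply_mul_apply {ι : Type*} [Fintype ι] [DecidableEq ι] (j k : ι) :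
    ∑ ε : ι → ℤˣ, ((ε j * ε k : ℤˣ) : ℤ) = if j = k then 2 ^ Fintype.card ι else 0 := by
  split_ifs with hjk
  · subst hjk
    simp [Int.units_mul_self, Fintype.card_units_int]
  · -- flipping the sign at `j` permutes the sign vectors and negates every summand
    have hflip := Fintype.sum_equiv (Equiv.mulLeft (Pi.mulSingle j (-1)))
      (fun ε : ι → ℤˣ => ((ε j * ε k : ℤˣ) : ℤ)) (fun ε => -((ε j * ε k : ℤˣ) : ℤ))
      (fun ε => by simp [Ne.symm hjk])
    rw [Finset.sum_neg_distrib] at hflip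
    omega

theorem sum_signed_sum_mul_mul_signed_sum {ι R : Type*} [Fintype ι] [DecidableEq ι] [Ring R]
    (P : ι → R) (ρ : R) :
    ∑ ε : ι → ℤˣ, (∑ j, ε j • P j) * ρ * (∑ j, ε j • P j) =
      2 ^ Fintype.card ι • ∑ j, P j * ρ * P j := by
  calc ∑ ε : ι → ℤˣ, (∑ j, ε j • P j) * ρ * (∑ j, ε j • P j)
      = ∑ ε : ι → ℤˣ, ∑ k, ∑ j, (ε k * ε j) • (P j * ρ * P k) := by
        simp only [Finset.sum_mul, Finset.mul_sum, smul_mul_assoc, mul_smul_comm, Finset.smul_sum,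
          smul_smul]
    _ = ∑ k, ∑ j, (∑ ε : ι → ℤˣ, ((ε k * ε j : ℤˣ) : ℤ)) • (P j * ρ * P k) := by
        simp only [Finset.sum_smul, Units.smul_def]
        rw [Finset.sum_comm]
        exact Finset.sum_congr rfl fun _ _ => Finset.sum_comm
    _ = 2 ^ Fintype.card ι • ∑ j, P j * ρ * P j := by
        simp only [sum_units_int_apply_mul_apply, ite_smul, zero_smul, Finset.sum_ite_eq,
          Finset.mem_univ, if_true, Finset.smul_sum]
        norm_cast

namespace Matrix

variable {𝕜 m : Type*} [RCLike 𝕜] [Fintype m]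

open scoped MatrixOrder in
theorem PosSemidef.trace_mul_nonneg {A B : Matrix m m 𝕜} (hA : A.PosSemidef)
    (hB : B.PosSemidef) : 0 ≤ (A * B).trace := by
  classical
  have hsqrt : (CFC.sqrt B)ᴴ = CFC.sqrt B := (CFC.sqrt_nonneg B).isSelfAdjoint
  rw [← CFC.sqrt_mul_sqrt_self B hB.nonneg, ← mul_assoc, trace_mul_cycle]
  simpa only [hsqrt] using (hA.mul_mul_conjTranspose_same (CFC.sqrt B)).trace_nonneg

theorem two_mul_trace_mul_le_two_pow_mul_trace_mul_sum_mul_mul [DecidableEq m]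
    {ι : Type*} [Fintype ι] [DecidableEq ι] [Nonempty ι]
    {P : ι → Matrix m m 𝕜} (hsa : ∀ j, (P j)ᴴ = P j) (hsum : ∑ j, P j = 1)
    {ρ E : Matrix m m 𝕜} (hρ : ρ.PosSemidef) (hE : E.PosSemidef) :
    2 * (E * ρ).trace ≤ 2 ^ Fintype.card ι * (E * ∑ j, P j * ρ * P j).trace := by
  set U : (ι → ℤˣ) → Matrix m m 𝕜 := fun ε => ∑ j, ε j • P j
  have hU_herm (ε) : (U ε)ᴴ = U ε := by
    simp only [U, conjTranspose_sum, Units.smul_def, conjTranspose_zsmul, hsa]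
  have hU_one : U 1 = 1 := by simp [U, hsum]
  have hU_neg_one : U (-1) = -1 := by simp [U, Finset.sum_neg_distrib, hsum]
  have h_nonneg (ε) : 0 ≤ (E * (U ε * ρ * U ε)).trace := by
    refine hE.trace_mul_nonneg ?_
    simpa only [hU_herm] using hρ.mul_mul_conjTranspose_same (U ε)
  have h_ne : (1 : ι → ℤˣ) ≠ -1 := by
    obtain ⟨i⟩ := ‹Nonempty ι›
    exact fun h => by simpa using congrFun h i
  calc 2 * (E * ρ).trace
      = (E * (U 1 * ρ * U 1)).trace + (E * (U (-1) * ρ * U (-1))).trace := by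
        simp [hU_one, hU_neg_one, two_mul]
    _ ≤ ∑ ε, (E * (U ε * ρ * U ε)).trace :=
        Finset.add_le_sum (fun ε _ => h_nonneg ε) (Finset.mem_univ _) (Finset.mem_univ _) h_ne
    _ = 2 ^ Fintype.card ι * (E * ∑ j, P j * ρ * P j).trace := by
        rw [← trace_sum, ← Finset.mul_sum, sum_signed_sum_mul_mul_signed_sum, mul_smul_comm,
          trace_smul, nsmul_eq_mul, Nat.cast_pow, Nat.cast_ofNat]

end Matrix

theorem measurement_disturbance_retains_possibility_general
    {d n : ℕ} (hn : 1 ≤ n) (P : Fin n → Matrix (Fin d) (Fin d) ℂ)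
    (hsa : ∀ j, (P j).conjTranspose = P j)
    (hsum : ∑ j, P j = 1)
    (ρ E : Matrix (Fin d) (Fin d) ℂ) (hρ : ρ.PosSemidef) (hE : E.PosSemidef) :
    (2 : ℝ) ^ ((1 : ℤ) - n) * ((E * ρ).trace).re ≤
      ((E * ∑ j, P j * ρ * P j).trace).re ∧
    (0 < ((E * ρ).trace).re → 0 < ((E * ∑ j, P j * ρ * P j).trace).re) := by
  have : Nonempty (Fin n) := ⟨⟨0, hn⟩⟩
  have h := (Complex.le_def.mp
    (Matrix.two_mul_trace_mul_le_two_pow_mul_trace_mul_sum_mul_mul hsa hsum hρ hE)).1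
  rw [Fintype.card_fin, ← Complex.ofReal_ofNat, ← Complex.ofReal_pow, Complex.re_ofReal_mul,
    Complex.re_ofReal_mul] at h
  have hscale : (2 : ℝ) ^ ((1 : ℤ) - n) * ((E * ρ).trace).re ≤
      ((E * ∑ j, P j * ρ * P j).trace).re := by
    rw [zpow_sub₀ two_ne_zero, zpow_one, zpow_natCast, div_mul_eq_mul_div,
      div_le_iff₀ (by positivity)]
    linarith
  exact ⟨hscale, fun hpos => (by positivity : 0 < (2 : ℝ) ^ ((1 : ℤ) - n) * _).trans_le hscale⟩

/-- For a projective measurement `(P j)_{j : Fin n}` (`n ≥ 1`) of complex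
`d × d` matrices and positive semidefinite matrices `ρ` (state) and `E`
(POVM element), `Re(tr(E · ∑ j, P j ρ P j)) ≥ 2^(1-n) · Re(tr(E ρ))`.
In particular, if `tr(E ρ) > 0` then `tr(E · ∑ j, P j ρ P j) > 0`:
performing the measurement and discarding the outcome cannot make a
subsequently possible outcome impossible. -/
theorem measurement_disturbance_retains_possibility
    {d n : ℕ} (hn : 1 ≤ n) (P : Fin n → Matrix (Fin d) (Fin d) ℂ)
    (hsa : ∀ j, (P j).conjTranspose = P j)
    (hidem : ∀ j, P j * P j = P j)
    (horth : ∀ j k, j ≠ k → P j * P k = 0)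
    (hsum : ∑ j, P j = 1)
    (ρ E : Matrix (Fin d) (Fin d) ℂ) (hρ : ρ.PosSemidef) (hE : E.PosSemidef) :
    (2 : ℝ) ^ ((1 : ℤ) - n) * ((E * ρ).trace).re ≤
      ((E * ∑ j, P j * ρ * P j).trace).re ∧
    (0 < ((E * ρ).trace).re → 0 < ((E * ∑ j, P j * ρ * P j).trace).re) :=
  measurement_disturbance_retains_possibility_general hn P hsa hsum ρ E hρ hE
end

section
/- In ℂ³ with standard orthonormal basis e₁, e₂, e₃, let ψ = (e₁ + e₂ + e₃)/√3 and φ = (e₁ + e₂ − e₃)/√3, and let P₁, P₂ be the orthogonal projections onto the spans of e₁ and e₂ respectively. Then the ABL probabilities satisfy ℙ(P₁|ψ,φ) = 1 and ℙ(P₂|ψ,φ) = 1; explicitly, ⟨φ, (1−P₁)ψ⟩ = 0, ⟨φ, (1−P₂)ψ⟩ = 0, and ⟨φ, P₁ψ⟩ ≠ 0, ⟨φ, P₂ψ⟩ ≠ 0. (This is the three-box paradox: whichever of box 1 or box 2 is opened, the ball is found there with certainty.) -/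
/-!
Up to the common real factor `3⁻¹`, the overlaps are `⟪φ, e₁⟫⟪e₁, ψ⟫ = ⟪φ, e₂⟫⟪e₂, ψ⟫ = 1` and
`⟪φ, ψ⟫ = 1 + 1 - 1 = 1`: the contribution of box 3 cancels that of one of the other boxes.
Hence `⟪φ, Pᵢ ψ⟫ = ⟪φ, ψ⟫ ≠ 0` and `⟪φ, (1 - Pᵢ) ψ⟫ = 0` for `i = 1, 2`, and the ABL
probability `|a|² / (|a|² + |0|²)` of either projection is `1`.
-/

open scoped InnerProductSpace

/-- The standard basis vector `eᵢ` of `ℂ³`. -/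
noncomputable def e (i : Fin 3) : EuclideanSpace ℂ (Fin 3) :=
  EuclideanSpace.single i 1

/-- The rank-one orthogonal projection onto the span of a unit vector `v`,
`w ↦ ⟪v, w⟫ • v`. -/
noncomputable def rankOneProj (v : EuclideanSpace ℂ (Fin 3)) :
    EuclideanSpace ℂ (Fin 3) →L[ℂ] EuclideanSpace ℂ (Fin 3) :=
  (innerSL ℂ v).smulRight v

/-- The pre-selection of the three-box paradox, `ψ = (e₁ + e₂ + e₃)/√3`. -/
noncomputable def ψ : EuclideanSpace ℂ (Fin 3) :=
  ((Real.sqrt 3 : ℂ))⁻¹ • (e 0 + e 1 + e 2)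

/-- The post-selection of the three-box paradox, `φ = (e₁ + e₂ - e₃)/√3`. -/
noncomputable def φ : EuclideanSpace ℂ (Fin 3) :=
  ((Real.sqrt 3 : ℂ))⁻¹ • (e 0 + e 1 - e 2)

lemma norm_sq_div_norm_sq_add_norm_sq_zero {E : Type*} [NormedAddCommGroup E] {a : E}
    (ha : a ≠ 0) : ‖a‖ ^ 2 / (‖a‖ ^ 2 + ‖(0 : E)‖ ^ 2) = 1 := by
  rw [norm_zero, zero_pow two_ne_zero, add_zero, div_self (by positivity)]

lemma inner_one_sub_apply {𝕜 E : Type*} [RCLike 𝕜] [NormedAddCommGroup E]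
    [InnerProductSpace 𝕜 E] (T : E →L[𝕜] E) (u w : E) :
    ⟪u, (1 - T) w⟫_𝕜 = ⟪u, w⟫_𝕜 - ⟪u, T w⟫_𝕜 := by
  rw [sub_apply, one_apply_eq_self, inner_sub_right]

lemma inner_rankOneProj_apply (u v w : EuclideanSpace ℂ (Fin 3)) :
    ⟪u, rankOneProj v w⟫_ℂ = ⟪u, v⟫_ℂ * ⟪v, w⟫_ℂ := by
  rw [rankOneProj, ContinuousLinearMap.smulRight_apply, innerSL_apply_apply, inner_smul_right,
    mul_comm]

lemma inner_e_sum_e (i : Fin 3) : ⟪e i, e 0 + e 1 + e 2⟫_ℂ = 1 := by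
  fin_cases i <;> simp [e, EuclideanSpace.inner_single_left]

lemma inner_sum_sub_e_e {i : Fin 3} (hi : i ≠ 2) : ⟪e 0 + e 1 - e 2, e i⟫_ℂ = 1 := by
  fin_cases i <;> simp_all [e, EuclideanSpace.inner_single_right]

lemma inner_sum_sub_e_sum_e : ⟪e 0 + e 1 - e 2, e 0 + e 1 + e 2⟫_ℂ = 1 := by
  simp [e, EuclideanSpace.inner_single_right]

lemma conj_inv_sqrt_three : (starRingEnd ℂ) (Real.sqrt 3 : ℂ)⁻¹ = (Real.sqrt 3 : ℂ)⁻¹ := by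
  rw [map_inv₀, Complex.conj_ofReal]

lemma inner_φ_ψ : ⟪φ, ψ⟫_ℂ = (Real.sqrt 3 : ℂ)⁻¹ * (Real.sqrt 3 : ℂ)⁻¹ := by
  rw [φ, ψ, inner_smul_left, inner_smul_right, inner_sum_sub_e_sum_e, conj_inv_sqrt_three, mul_one]

lemma inner_φ_ψ_ne_zero : ⟪φ, ψ⟫_ℂ ≠ 0 := by
  simp [inner_φ_ψ]

lemma inner_φ_rankOneProj_e_ψ {i : Fin 3} (hi : i ≠ 2) : ⟪φ, rankOneProj (e i) ψ⟫_ℂ = ⟪φ, ψ⟫_ℂ := by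
  rw [inner_rankOneProj_apply, inner_φ_ψ, φ, ψ, inner_smul_left, inner_smul_right,
    inner_sum_sub_e_e hi, inner_e_sum_e, conj_inv_sqrt_three, mul_one]

lemma inner_φ_one_sub_rankOneProj_e_ψ {i : Fin 3} (hi : i ≠ 2) :
    ⟪φ, (1 - rankOneProj (e i)) ψ⟫_ℂ = 0 := by
  rw [inner_one_sub_apply, inner_φ_rankOneProj_e_ψ hi, sub_self]

/-- The three-box paradox: with pre-selection `ψ` and post-selection `φ`,
the ABL probabilities of the projections onto box 1 and box 2 are both `1`;
explicitly `⟪φ, (1 - Pᵢ) ψ⟫ = 0` and `⟪φ, Pᵢ ψ⟫ ≠ 0` for `i = 1, 2`. -/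
theorem three_box_paradox :
    ⟪φ, (1 - rankOneProj (e 0)) ψ⟫_ℂ = 0 ∧
    ⟪φ, (1 - rankOneProj (e 1)) ψ⟫_ℂ = 0 ∧
    ⟪φ, rankOneProj (e 0) ψ⟫_ℂ ≠ 0 ∧
    ⟪φ, rankOneProj (e 1) ψ⟫_ℂ ≠ 0 ∧
    ‖⟪φ, rankOneProj (e 0) ψ⟫_ℂ‖ ^ 2 /
        (‖⟪φ, rankOneProj (e 0) ψ⟫_ℂ‖ ^ 2 +
          ‖⟪φ, (1 - rankOneProj (e 0)) ψ⟫_ℂ‖ ^ 2) = 1 ∧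
    ‖⟪φ, rankOneProj (e 1) ψ⟫_ℂ‖ ^ 2 /
        (‖⟪φ, rankOneProj (e 1) ψ⟫_ℂ‖ ^ 2 +
          ‖⟪φ, (1 - rankOneProj (e 1)) ψ⟫_ℂ‖ ^ 2) = 1 := by
  have hP₀ : ⟪φ, rankOneProj (e 0) ψ⟫_ℂ ≠ 0 :=
    inner_φ_rankOneProj_e_ψ (i := 0) (by decide) ▸ inner_φ_ψ_ne_zero
  have hP₁ : ⟪φ, rankOneProj (e 1) ψ⟫_ℂ ≠ 0 :=
    inner_φ_rankOneProj_e_ψ (i := 1) (by decide) ▸ inner_φ_ψ_ne_zero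
  have hQ₀ := inner_φ_one_sub_rankOneProj_e_ψ (i := 0) (by decide)
  have hQ₁ := inner_φ_one_sub_rankOneProj_e_ψ (i := 1) (by decide)
  refine ⟨hQ₀, hQ₁, hP₀, hP₁, ?_, ?_⟩
  · rw [hQ₀]; exact norm_sq_div_norm_sq_add_norm_sq_zero hP₀
  · rw [hQ₁]; exact norm_sq_div_norm_sq_add_norm_sq_zero hP₁
end

section
/- In ℂ³ with standard orthonormal basis e₁, e₂, e₃, let P₁ and P₂ be the orthogonal projections onto the spans of e₁ and e₂. There is no function f from the orthogonal projections on ℂ³ to ℝ satisfying the algebraic conditions with f(P₁) = 1 and f(P₂) = 1. (The three-box paradox admits no extension of its ABL probabilities to the generated partial boolean algebra.) -/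
/-!
`P₁` and `P₂` are orthogonal rank-one projections, so `P₁ P₂ = P₂ P₁ = 0` and the algebraic
conditions force `f(P₁ + P₂) = f(P₁) + f(P₂) = 2`. But `P₁ + P₂` is itself an orthogonal
projection, on which `f` is at most `1`.
-/

/-- An orthogonal projection: a self-adjoint idempotent continuous linear
operator. -/
def IsOrthogonalProjection
    (P : EuclideanSpace ℂ (Fin 3) →L[ℂ] EuclideanSpace ℂ (Fin 3)) : Prop :=
  IsSelfAdjoint P ∧ P * P = P

open InnerProductSpace

theorem IsStarProjection.apply_add_of_mul_eq_zero {R M : Type*} [Ring R] [StarRing R]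
    [AddCommGroup M] {f : R → M} (h0 : f 0 = 0)
    (hadd : ∀ p q, IsStarProjection p → IsStarProjection q →
      p * q = q * p → f (p + q - p * q) = f p + f q - f (p * q))
    {p q : R} (hp : IsStarProjection p) (hq : IsStarProjection q) (hpq : p * q = 0) :
    f (p + q) = f p + f q := by
  have hqp : q * p = 0 := by
    simpa [hp.isSelfAdjoint.star_eq, hq.isSelfAdjoint.star_eq] using congr(star $(hpq))
  simpa [hpq, h0] using hadd p q hp hq (hpq.trans hqp.symm)

lemma isOrthogonalProjection_iff_isStarProjection
    {P : EuclideanSpace ℂ (Fin 3) →L[ℂ] EuclideanSpace ℂ (Fin 3)} :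
    IsOrthogonalProjection P ↔ IsStarProjection P :=
  (isStarProjection_iff P).trans and_comm |>.symm

lemma rankOneProj_eq_rankOne (v : EuclideanSpace ℂ (Fin 3)) : rankOneProj v = rankOne ℂ v v :=
  rfl

lemma isStarProjection_rankOneProj {v : EuclideanSpace ℂ (Fin 3)} (hv : ‖v‖ = 1) :
    IsStarProjection (rankOneProj v) :=
  isStarProjection_rankOne_self hv

lemma rankOneProj_mul_of_inner_eq_zero {v w : EuclideanSpace ℂ (Fin 3)} (h : ⟪v, w⟫_ℂ = 0) :
    rankOneProj v * rankOneProj w = 0 := by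
  rw [ContinuousLinearMap.mul_def, rankOneProj_eq_rankOne, rankOneProj_eq_rankOne,
    rankOne_comp_rankOne, h, zero_smul]

lemma orthonormal_e : Orthonormal ℂ e :=
  EuclideanSpace.orthonormal_single

/-- The three-box paradox admits no extension to a function `f` on the
orthogonal projections of `ℂ³` satisfying the algebraic conditions with
`f(P₁) = f(P₂) = 1`. -/
theorem three_box_no_algebraic_extension :
    ¬ ∃ f : (EuclideanSpace ℂ (Fin 3) →L[ℂ] EuclideanSpace ℂ (Fin 3)) → ℝ,
      (∀ P, IsOrthogonalProjection P → 0 ≤ f P ∧ f P ≤ 1) ∧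
      (f 1 = 1 ∧ f 0 = 0) ∧
      (∀ P Q, IsOrthogonalProjection P → IsOrthogonalProjection Q →
        P * Q = Q * P → f (P + Q - P * Q) = f P + f Q - f (P * Q)) ∧
      f (rankOneProj (e 0)) = 1 ∧ f (rankOneProj (e 1)) = 1 := by
  rintro ⟨f, hbound, ⟨-, h0⟩, hadd, h1, h2⟩
  simp only [isOrthogonalProjection_iff_isStarProjection] at hbound hadd
  have hP := isStarProjection_rankOneProj (orthonormal_e.1 0)
  have hQ := isStarProjection_rankOneProj (orthonormal_e.1 1)
  have hPQ := rankOneProj_mul_of_inner_eq_zero (orthonormal_e.2 (by decide : (0 : Fin 3) ≠ 1))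
  have hsum : f (rankOneProj (e 0) + rankOneProj (e 1)) = 2 := by
    rw [hP.apply_add_of_mul_eq_zero h0 hadd hQ hPQ, h1, h2]
    norm_num
  linarith [(hbound _ (hP.add hQ hPQ)).2]
end

section
/- Let H be a complex inner product space, ψ, φ ∈ H with ⟨φ, ψ⟩ ≠ 0, and P a continuous linear operator on H. If the ABL probability of P equals 1, i.e. |⟨φ, Pψ⟩|² = |⟨φ, Pψ⟩|² + |⟨φ, (1−P)ψ⟩|², then the weak value satisfies w(P|ψ,φ) = 1. If the ABL probability of P equals 0, i.e. ⟨φ, Pψ⟩ = 0, then w(P|ψ,φ) = 0. Hence whenever the ABL probability of P is 0 or 1, the weak value of P equals the ABL probability. -/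
open scoped InnerProductSpace

section WeakValue

variable {𝕜 H : Type*} [RCLike 𝕜] [NormedAddCommGroup H] [InnerProductSpace 𝕜 H]

noncomputable def weakValue (A : H →L[𝕜] H) (ψ φ : H) : ℝ :=
  RCLike.re (⟪φ, A ψ⟫_𝕜 / ⟪φ, ψ⟫_𝕜)

theorem weakValue_eq_zero_of_inner_eq_zero {A : H →L[𝕜] H} {ψ φ : H} (h : ⟪φ, A ψ⟫_𝕜 = 0) :
    weakValue A ψ φ = 0 := by
  simp [weakValue, h]

theorem inner_one_sub_apply_eq_zero_iff {A : H →L[𝕜] H} {ψ φ : H} :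
    ⟪φ, (1 - A) ψ⟫_𝕜 = 0 ↔ ⟪φ, A ψ⟫_𝕜 = ⟪φ, ψ⟫_𝕜 := by
  rw [sub_apply, one_apply_eq_self, inner_sub_right, sub_eq_zero, eq_comm]

theorem weakValue_eq_one_of_inner_one_sub_eq_zero {A : H →L[𝕜] H} {ψ φ : H}
    (hφψ : ⟪φ, ψ⟫_𝕜 ≠ 0) (h : ⟪φ, (1 - A) ψ⟫_𝕜 = 0) : weakValue A ψ φ = 1 := by
  simp [weakValue, inner_one_sub_apply_eq_zero_iff.mp h, div_self hφψ]

end WeakValue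

theorem eq_zero_of_sq_norm_eq_sq_norm_add_sq_norm {E : Type*} [NormedAddCommGroup E] {x y : E}
    (h : ‖x‖ ^ 2 = ‖x‖ ^ 2 + ‖y‖ ^ 2) : y = 0 := by
  simpa using (left_eq_add.mp h)

/-- If the ABL probability of `P` is 1 (numerator equals denominator), the
weak value `w(P) = Re(⟪φ, P ψ⟫ / ⟪φ, ψ⟫)` equals 1; if the ABL probability
is 0 (`⟪φ, P ψ⟫ = 0`), the weak value equals 0. Hence 0/1 ABL probabilities
are reproduced by the weak values. -/
theorem weak_value_eq_abl_of_zero_one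
    {H : Type*} [NormedAddCommGroup H] [InnerProductSpace ℂ H]
    (ψ φ : H) (hφψ : ⟪φ, ψ⟫_ℂ ≠ 0) (P : H →L[ℂ] H) :
    (‖⟪φ, P ψ⟫_ℂ‖ ^ 2 = ‖⟪φ, P ψ⟫_ℂ‖ ^ 2 + ‖⟪φ, (1 - P) ψ⟫_ℂ‖ ^ 2 →
      (⟪φ, P ψ⟫_ℂ / ⟪φ, ψ⟫_ℂ).re = 1) ∧
    (⟪φ, P ψ⟫_ℂ = 0 → (⟪φ, P ψ⟫_ℂ / ⟪φ, ψ⟫_ℂ).re = 0) :=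
  ⟨fun h => weakValue_eq_one_of_inner_one_sub_eq_zero hφψ
      (eq_zero_of_sq_norm_eq_sq_norm_add_sq_norm h),
    weakValue_eq_zero_of_inner_eq_zero⟩
end
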